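/- In the Approval Set setting with K = 3: if no committee of size 2 satisfies n₂(S) > n/3 and no committee of size 2 satisfies n_{≥1}(S) ≥ 2n/3, then there exists a committee T with |T| ≤ 1 that admits no blocking committee of size 1 or 2. Consequently, in the Approval Set setting with K = 3 a stable committee always exists. -/

import Mathlib

/-- `V(S,S')` in the Approval Set model. -/
noncomputable def Vappr {C : Type*} [DecidableEq C] (n : ℕ)
    (A : Fin n → Finset C) (S S' : Finset C) : ℕ :=
  Nat.card {v : Fin n // (S ∩ A v).card < (S' ∩ A v).card}

/-- Number of voters approving exactly `i` members of `S`. -/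
noncomputable def nExact {C : Type*} [DecidableEq C] (n : ℕ)
    (A : Fin n → Finset C) (S : Finset C) (i : ℕ) : ℕ :=
  Nat.card {v : Fin n // (S ∩ A v).card = i}

/-- Number of voters approving at least `i` members of `S`. -/
noncomputable def nAtLeast {C : Type*} [DecidableEq C] (n : ℕ)
    (A : Fin n → Finset C) (S : Finset C) (i : ℕ) : ℕ :=
  Nat.card {v : Fin n // i ≤ (S ∩ A v).card}

/-! A voter preferring `S'` to `T` approves a member of `S'`, so `V(T, S') ≤ n_{≥1}(S')`. This is
`< 2n/3` for pairs by hypothesis, and `< n` for triples because a voter approving a member of a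
triple approves a member of at least two of its pairs. So only singletons can block, and the
blocking thresholds become `3 V < |S'| n` over `ℕ`. -/

open Finset

section Counting

variable {C : Type*} [DecidableEq C] {n : ℕ} (A : Fin n → Finset C)

lemma one_le_card_inter_iff {s t : Finset C} : 1 ≤ (s ∩ t).card ↔ ∃ x ∈ s, x ∈ t := by
  simp only [one_le_card, Finset.Nonempty, mem_inter]

lemma Vappr_eq_card_filter (S S' : Finset C) :
    Vappr n A S S' = #{v | (S ∩ A v).card < (S' ∩ A v).card} := by
  rw [Vappr, Nat.card_eq_fintype_card, Fintype.card_subtype]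

lemma nAtLeast_eq_card_filter (S : Finset C) (i : ℕ) :
    nAtLeast n A S i = #{v | i ≤ (S ∩ A v).card} := by
  rw [nAtLeast, Nat.card_eq_fintype_card, Fintype.card_subtype]

lemma Vappr_self (S : Finset C) : Vappr n A S S = 0 := by
  simp [Vappr_eq_card_filter]

lemma Vappr_le_nAtLeast_one (T S' : Finset C) : Vappr n A T S' ≤ nAtLeast n A S' 1 := by
  rw [Vappr_eq_card_filter, nAtLeast_eq_card_filter]
  exact card_le_card fun v ↦ by simp only [mem_filter, mem_univ, true_and]; omega

/-- The voters counted on the left approve `a`, respectively approve `b` but not `a`. -/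
lemma Vappr_empty_singleton_add_Vappr_singleton_le (a b : C) :
    Vappr n A ∅ {a} + Vappr n A {a} {b} ≤ nAtLeast n A {a, b} 1 := by
  simp only [Vappr_eq_card_filter, nAtLeast_eq_card_filter, card_filter, ← sum_add_distrib]
  refine sum_le_sum fun v _ ↦ ?_
  have hb := card_singleton_inter (a := b) (s := A v)
  have hab : 1 ≤ ({a, b} ∩ A v).card ↔ 1 ≤ ({a} ∩ A v).card ∨ 1 ≤ ({b} ∩ A v).card := by
    simp only [one_le_card_inter_iff, mem_insert, mem_singleton, exists_eq_or_imp, exists_eq_left]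
  simp only [empty_inter, card_empty] at *
  split_ifs <;> omega

lemma two_mul_nAtLeast_one_triple_le (x y z : C) :
    2 * nAtLeast n A {x, y, z} 1 ≤
      nAtLeast n A {x, y} 1 + nAtLeast n A {x, z} 1 + nAtLeast n A {y, z} 1 := by
  simp only [nAtLeast_eq_card_filter, card_filter, mul_sum, ← sum_add_distrib]
  refine sum_le_sum fun v _ ↦ ?_
  simp only [one_le_card_inter_iff, mem_insert, mem_singleton, exists_eq_or_imp, exists_eq_left]
  split_ifs <;> tauto

end Counting

lemma natCast_lt_div_three_mul_iff {m k n : ℕ} : (m : ℝ) < (k : ℝ) / 3 * n ↔ 3 * m < k * n := by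
  rw [div_mul_eq_mul_div, lt_div_iff₀ three_pos]
  norm_cast
  rw [mul_comm]

section Covering

variable {C : Type*} [DecidableEq C] {n : ℕ} {A : Fin n → Finset C}

lemma three_mul_Vappr_lt_of_card_eq_two
    (hpair : ∀ S : Finset C, S.card = 2 → 3 * nAtLeast n A S 1 < 2 * n)
    (T : Finset C) {S' : Finset C} (hS' : S'.card = 2) : 3 * Vappr n A T S' < 2 * n := by
  have := Vappr_le_nAtLeast_one A T S'
  have := hpair S' hS'
  omega

lemma Vappr_lt_of_card_eq_three
    (hpair : ∀ S : Finset C, S.card = 2 → 3 * nAtLeast n A S 1 < 2 * n)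
    (T : Finset C) {S' : Finset C} (hS' : S'.card = 3) : Vappr n A T S' < n := by
  obtain ⟨x, y, z, hxy, hxz, hyz, rfl⟩ := card_eq_three.mp hS'
  have := Vappr_le_nAtLeast_one A T {x, y, z}
  have := two_mul_nAtLeast_one_triple_le A x y z
  have := hpair _ (card_pair hxy)
  have := hpair _ (card_pair hxz)
  have := hpair _ (card_pair hyz)
  omega

lemma three_mul_Vappr_lt_of_forall_singleton
    (hpair : ∀ S : Finset C, S.card = 2 → 3 * nAtLeast n A S 1 < 2 * n)
    {T : Finset C} (hT : ∀ b, 3 * Vappr n A T {b} < n)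
    {S' : Finset C} (hS' : S'.Nonempty) (hS'2 : S'.card ≤ 2) :
    3 * Vappr n A T S' < S'.card * n := by
  obtain hS'1 | hS'2 : S'.card = 1 ∨ S'.card = 2 := by
    have := hS'.card_pos
    omega
  · obtain ⟨b, rfl⟩ := card_eq_one.mp hS'1
    simpa using hT b
  · rw [hS'2]
    exact three_mul_Vappr_lt_of_card_eq_two hpair T hS'2

/-- Take `T = ∅` unless some `{a}` blocks it, and then `T = {a}`: a singleton `{b}` blocking
`{a}` as well would make `{a, b}` approved by at least `2n/3` voters. -/
lemma exists_card_le_one_forall_three_mul_Vappr_lt (hn : 0 < n)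
    (hpair : ∀ S : Finset C, S.card = 2 → 3 * nAtLeast n A S 1 < 2 * n) :
    ∃ T : Finset C, T.card ≤ 1 ∧
      ∀ S' : Finset C, S'.Nonempty → S'.card ≤ 2 → 3 * Vappr n A T S' < S'.card * n := by
  by_cases hblock : ∃ a, n ≤ 3 * Vappr n A ∅ {a}
  · obtain ⟨a, ha⟩ := hblock
    refine ⟨{a}, (card_singleton a).le, fun S' ↦ three_mul_Vappr_lt_of_forall_singleton hpair ?_⟩
    intro b
    obtain rfl | hab := eq_or_ne b a
    · simpa [Vappr_self] using hn
    · have := Vappr_empty_singleton_add_Vappr_singleton_le A a b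
      have := hpair _ (card_pair hab.symm)
      omega
  · simp only [not_exists, not_le] at hblock
    exact ⟨∅, by simp, fun S' ↦ three_mul_Vappr_lt_of_forall_singleton hpair hblock⟩

end Covering

theorem case_three_and_stable_exists_general {C : Type*} [DecidableEq C]
    (n : ℕ) (hn : 0 < n) (A : Fin n → Finset C)
    (hno2 : ∀ S : Finset C, S.card = 2 →
      ¬ (2 * (n : ℝ) / 3 ≤ (nAtLeast n A S 1 : ℝ))) :
    (∃ T : Finset C, T.card ≤ 1 ∧
      ∀ S' : Finset C, S'.Nonempty → S'.card ≤ 2 →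
        (Vappr n A T S' : ℝ) < ((S'.card : ℝ) / 3) * n) ∧
    (∃ T' : Finset C, T'.card ≤ 3 ∧
      ∀ S' : Finset C, S'.Nonempty → S'.card ≤ 3 →
        (Vappr n A T' S' : ℝ) < ((S'.card : ℝ) / 3) * n) := by
  have hpair : ∀ S : Finset C, S.card = 2 → 3 * nAtLeast n A S 1 < 2 * n := fun S hS ↦ by
    have := hno2 S hS
    rwa [not_le, mul_div_right_comm, ← Nat.cast_ofNat (R := ℝ) (n := 2),
      natCast_lt_div_three_mul_iff] at this
  obtain ⟨T, hT1, hT⟩ := exists_card_le_one_forall_three_mul_Vappr_lt hn hpair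
  simp only [natCast_lt_div_three_mul_iff]
  refine ⟨⟨T, hT1, hT⟩, T, by omega, fun S' hS' hS'3 ↦ ?_⟩
  obtain hS'2 | hS'3 := hS'3.lt_or_eq
  · exact hT S' hS' (by omega)
  · rw [hS'3]
    have := Vappr_lt_of_card_eq_three hpair T hS'3
    omega

/-- Approval Set setting, `K = 3`, Case (3): if no size-2 committee `S` has
`n₂(S) > n/3`, and no size-2 committee has `n_{≥1}(S) ≥ 2n/3`, then some
committee `T` with `|T| ≤ 1` has no blocking committee of size 1 or 2;
consequently a stable committee (of size at most 3) exists. -/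
theorem case_three_and_stable_exists {C : Type*} [Fintype C] [DecidableEq C]
    (n : ℕ) (hn : 0 < n) (A : Fin n → Finset C)
    (hno1 : ∀ S : Finset C, S.card = 2 → ¬ ((n : ℝ) / 3 < (nExact n A S 2 : ℝ)))
    (hno2 : ∀ S : Finset C, S.card = 2 →
      ¬ (2 * (n : ℝ) / 3 ≤ (nAtLeast n A S 1 : ℝ))) :
    (∃ T : Finset C, T.card ≤ 1 ∧
      ∀ S' : Finset C, S'.Nonempty → S'.card ≤ 2 →
        (Vappr n A T S' : ℝ) < ((S'.card : ℝ) / 3) * n) ∧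
    (∃ T' : Finset C, T'.card ≤ 3 ∧
      ∀ S' : Finset C, S'.Nonempty → S'.card ≤ 3 →
        (Vappr n A T' S' : ℝ) < ((S'.card : ℝ) / 3) * n) :=
  case_three_and_stable_exists_general n hn A hno2
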